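/- arXiv:1311.5152 — 7 statements merged into one kernel-verified Lean document; each statement's English description precedes it below -/
import Mathlib

section
/- Let v, w ∈ ℝ³ with ‖v‖ = ‖w‖ = 1 and v ≠ w, and set p = (v × w)/‖v − w‖ and q = (v − w)/‖v − w‖. Then ‖q‖ = 1, ⟨p, q⟩ = 0, ‖p‖ = ‖v + w‖/2 < 1, and ⟨p × q, e₁⟩ = ((v + w)·e₁)/2, where e₁ = (1,0,0). -/
open scoped RealInnerProductSpace

/-- The cross product on `ℝ³`, viewed as `EuclideanSpace ℝ (Fin 3)`. -/
noncomputable def cross (v w : EuclideanSpace ℝ (Fin 3)) : EuclideanSpace ℝ (Fin 3) :=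
  WithLp.toLp 2 ![v 1 * w 2 - v 2 * w 1, v 2 * w 0 - v 0 * w 2, v 0 * w 1 - v 1 * w 0]

/-- The first standard basis vector `e₁ = (1,0,0)` of `ℝ³`. -/
noncomputable def e₁ : EuclideanSpace ℝ (Fin 3) := WithLp.toLp 2 (![1, 0, 0] : Fin 3 → ℝ)

/-! With `d = ‖v - w‖`, everything reduces to two identities for vectors of equal norm:
`4 ‖v × w‖² = ‖v - w‖² ‖v + w‖²` (Lagrange's identity against the parallelogram expansions) and
`(v × w) × (v - w) = (d² / 2) (v + w)` (the triple product expansion). Hence `p × q = (v + w) / 2`,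
and `‖v + w‖ < 2` is the strict convexity of the Euclidean norm. -/

open Matrix WithLp

namespace EuclideanSpace

variable (u v w : EuclideanSpace ℝ (Fin 3))

theorem cross_eq_toLp_crossProduct : cross v w = toLp 2 (ofLp v ⨯₃ ofLp w) := by
  rw [cross_apply]; rfl

theorem real_inner_eq_dotProduct : ⟪v, w⟫ = ofLp v ⬝ᵥ ofLp w :=
  (inner_eq_star_dotProduct v w).trans (dotProduct_comm _ _)

theorem inner_cross_self_left : ⟪cross v w, v⟫ = 0 := by
  rw [real_inner_eq_dotProduct, cross_eq_toLp_crossProduct, ofLp_toLp, dotProduct_comm,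
    dot_self_cross]

theorem inner_cross_self_right : ⟪cross v w, w⟫ = 0 := by
  rw [real_inner_eq_dotProduct, cross_eq_toLp_crossProduct, ofLp_toLp, dotProduct_comm,
    dot_cross_self]

theorem cross_smul_left (a : ℝ) : cross (a • v) w = a • cross v w := by
  simp only [cross_eq_toLp_crossProduct, ofLp_smul, map_smul, LinearMap.smul_apply, toLp_smul]

theorem cross_smul_right (a : ℝ) : cross v (a • w) = a • cross v w := by
  simp only [cross_eq_toLp_crossProduct, ofLp_smul, map_smul, toLp_smul]

theorem cross_cross : cross (cross u v) w = ⟪u, w⟫ • v - ⟪v, w⟫ • u := by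
  simp only [cross_eq_toLp_crossProduct, cross_cross_eq_smul_sub_smul,
    real_inner_eq_dotProduct, toLp_sub, toLp_smul, toLp_ofLp]

theorem norm_cross_sq : ‖cross v w‖ ^ 2 = ‖v‖ ^ 2 * ‖w‖ ^ 2 - ⟪v, w⟫ ^ 2 := by
  simp only [← real_inner_self_eq_norm_sq, real_inner_eq_dotProduct, cross_eq_toLp_crossProduct,
    cross_dot_cross, dotProduct_comm (ofLp w) (ofLp v)]
  ring

variable {v w}

theorem two_mul_norm_cross_of_norm_eq (h : ‖v‖ = ‖w‖) : 2 * ‖cross v w‖ = ‖v - w‖ * ‖v + w‖ := by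
  have hsq : (2 * ‖cross v w‖) ^ 2 = (‖v - w‖ * ‖v + w‖) ^ 2 := by
    rw [mul_pow, mul_pow, norm_cross_sq, norm_sub_sq_real, norm_add_sq_real, h]
    ring
  exact (pow_left_inj₀ (by positivity) (by positivity) two_ne_zero).mp hsq

theorem cross_cross_sub_of_norm_eq (h : ‖v‖ = ‖w‖) :
    cross (cross v w) (v - w) = (‖v - w‖ ^ 2 / 2) • (v + w) := by
  rw [cross_cross, inner_sub_right, inner_sub_right, real_inner_self_eq_norm_sq,
    real_inner_self_eq_norm_sq, real_inner_comm v w, norm_sub_sq_real, h, smul_add]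
  module

end EuclideanSpace

open EuclideanSpace in
/-- For distinct unit vectors `v, w ∈ ℝ³`, setting `p = (v × w)/‖v − w‖` and
`q = (v − w)/‖v − w‖`, one has `‖q‖ = 1`, `⟨p, q⟩ = 0`, `‖p‖ = ‖v + w‖/2 < 1`, and
`⟨p × q, e₁⟩ = ((v + w)·e₁)/2`. -/
theorem phi_two_well_defined (v w : EuclideanSpace ℝ (Fin 3))
    (hv : ‖v‖ = 1) (hw : ‖w‖ = 1) (hvw : v ≠ w) :
    ‖(‖v - w‖)⁻¹ • (v - w)‖ = 1 ∧
    ⟪(‖v - w‖)⁻¹ • cross v w, (‖v - w‖)⁻¹ • (v - w)⟫ = 0 ∧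
    ‖(‖v - w‖)⁻¹ • cross v w‖ = ‖v + w‖ / 2 ∧
    ‖(‖v - w‖)⁻¹ • cross v w‖ < 1 ∧
    ⟪cross ((‖v - w‖)⁻¹ • cross v w) ((‖v - w‖)⁻¹ • (v - w)), e₁⟫ = ⟪v + w, e₁⟫ / 2 := by
  have hne : v - w ≠ 0 := sub_ne_zero.mpr hvw
  have hd : ‖v - w‖ ≠ 0 := norm_ne_zero_iff.mpr hne
  have hnorm : ‖v‖ = ‖w‖ := hv.trans hw.symm
  have hp : ‖(‖v - w‖)⁻¹ • cross v w‖ = ‖v + w‖ / 2 := by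
    rw [norm_smul, norm_inv, norm_norm, inv_mul_eq_div, div_eq_div_iff hd two_ne_zero]
    linarith [two_mul_norm_cross_of_norm_eq hnorm]
  have hsum : ‖v + w‖ < 2 := by
    have := norm_add_lt_of_not_sameRay fun hr => hvw (hr.eq_of_norm_eq hnorm)
    rwa [hv, hw, one_add_one_eq_two] at this
  have hpq : cross ((‖v - w‖)⁻¹ • cross v w) ((‖v - w‖)⁻¹ • (v - w)) =
      (1 / 2 : ℝ) • (v + w) := by
    rw [cross_smul_left, cross_smul_right, cross_cross_sub_of_norm_eq hnorm, smul_smul,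
      smul_smul]
    congr 1
    field_simp
  refine ⟨norm_smul_inv_norm hne, ?_, hp, by linarith, ?_⟩
  · rw [real_inner_smul_left, real_inner_smul_right, inner_sub_right, inner_cross_self_left,
      inner_cross_self_right, sub_zero, mul_zero, mul_zero]
  · rw [hpq, real_inner_smul_left]
    ring
end

section
/- Let p, q ∈ ℝ³ satisfy ‖q‖ = 1, ⟨p, q⟩ = 0 and ‖p‖ < 1, and define v = √(1 − ‖p‖²)·q − q × p and w = −√(1 − ‖p‖²)·q − q × p. Then ‖v‖ = ‖w‖ = 1, v ≠ w, (v × w)/‖v − w‖ = p, and (v − w)/‖v − w‖ = q. -/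
open scoped RealInnerProductSpace

/-!
Write `s = √(1 - ‖p‖²)` and `c = q × p`, so that `v, w = ±s q - c`. Since `c ⊥ q`, Pythagoras and
Lagrange's identity `‖q × p‖² = ‖q‖²‖p‖² - ⟪q, p⟫²` give `‖v‖² = ‖w‖² = s² + ‖p‖² = 1`. Moreover
`v - w = 2s q`, and bilinearity with the triple product expansion gives
`v × w = -2s q × (q × p) = 2s p`.
-/

open Matrix WithLp

section CrossProduct

variable (a b c : EuclideanSpace ℝ (Fin 3))

theorem cross_eq_crossProduct : cross a b = toLp 2 (ofLp a ⨯₃ ofLp b) := rfl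

theorem real_inner_eq_dotProduct : ⟪a, b⟫ = ofLp a ⬝ᵥ ofLp b := by
  rw [EuclideanSpace.inner_eq_star_dotProduct, star_trivial, dotProduct_comm]

theorem inner_self_cross : ⟪a, cross a b⟫ = 0 := by
  rw [real_inner_eq_dotProduct, cross_eq_crossProduct, ofLp_toLp, dot_self_cross]

theorem norm_cross_sq : ‖cross a b‖ ^ 2 = ‖a‖ ^ 2 * ‖b‖ ^ 2 - ⟪a, b⟫ ^ 2 := by
  simp only [← real_inner_self_eq_norm_sq, real_inner_eq_dotProduct, cross_eq_crossProduct,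
    cross_dot_cross, dotProduct_comm (ofLp b)]
  ring

theorem cross_cross_eq_inner_smul_sub_inner_smul :
    cross a (cross b c) = ⟪a, c⟫ • b - ⟪a, b⟫ • c := by
  simp only [real_inner_eq_dotProduct, cross_eq_crossProduct,
    cross_cross_eq_smul_sub_smul', dotProduct_comm (ofLp b)]
  rfl

theorem cross_smul_sub_smul_sub (s t : ℝ) :
    cross (s • a - c) (t • a - c) = (t - s) • cross a c := by
  simp only [cross_eq_crossProduct, ofLp_sub, ofLp_smul, map_sub, map_smul, LinearMap.sub_apply,
    LinearMap.smul_apply, cross_self, ← cross_anticomm (ofLp a) (ofLp c), ← toLp_smul]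
  congr 1
  module

end CrossProduct

/-- The explicit inverse formula of Lemma 2.3: if `p, q ∈ ℝ³` satisfy `‖q‖ = 1`,
`⟨p, q⟩ = 0` and `‖p‖ < 1`, then `v = √(1 − ‖p‖²)·q − q × p` and
`w = −√(1 − ‖p‖²)·q − q × p` are distinct unit vectors with
`(v × w)/‖v − w‖ = p` and `(v − w)/‖v − w‖ = q`. -/
theorem phi_two_inverse (p q : EuclideanSpace ℝ (Fin 3))
    (hq : ‖q‖ = 1) (hpq : ⟪p, q⟫ = 0) (hp : ‖p‖ < 1)
    (v w : EuclideanSpace ℝ (Fin 3))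
    (hv : v = Real.sqrt (1 - ‖p‖ ^ 2) • q - cross q p)
    (hw : w = -(Real.sqrt (1 - ‖p‖ ^ 2)) • q - cross q p) :
    ‖v‖ = 1 ∧ ‖w‖ = 1 ∧ v ≠ w ∧
    (‖v - w‖)⁻¹ • cross v w = p ∧ (‖v - w‖)⁻¹ • (v - w) = q := by
  set s := Real.sqrt (1 - ‖p‖ ^ 2)
  have hp_sq : 0 < 1 - ‖p‖ ^ 2 := by nlinarith [norm_nonneg p]
  have hs_sq : s ^ 2 = 1 - ‖p‖ ^ 2 := Real.sq_sqrt hp_sq.le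
  have hs_pos : 0 < 2 * s := mul_pos two_pos (Real.sqrt_pos.mpr hp_sq)
  have hqp : ⟪q, p⟫ = 0 := by rwa [real_inner_comm]
  have hnorm (t : ℝ) (ht : t ^ 2 = s ^ 2) : ‖t • q - cross q p‖ = 1 := by
    rw [← pow_eq_one_iff_of_nonneg (norm_nonneg _) two_ne_zero, norm_sub_sq_real,
      real_inner_smul_left, inner_self_cross, norm_cross_sq, norm_smul, mul_pow, Real.norm_eq_abs,
      sq_abs, hq, hqp, ht, hs_sq]
    ring
  have hvw : v - w = (2 * s) • q := by rw [hv, hw]; module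
  have hnvw : ‖v - w‖ = 2 * s := by rw [hvw, norm_smul, hq, Real.norm_of_nonneg hs_pos.le, mul_one]
  have hcross : cross v w = (2 * s) • p := by
    rw [hv, hw, cross_smul_sub_smul_sub, cross_cross_eq_inner_smul_sub_inner_smul,
      real_inner_self_eq_norm_sq, hq, hqp]
    module
  refine ⟨hv ▸ hnorm s rfl, hw ▸ hnorm (-s) (neg_sq s), ?_, ?_, ?_⟩
  · rw [← sub_ne_zero, hvw]
    exact smul_ne_zero hs_pos.ne' (norm_ne_zero_iff.mp (hq ▸ one_ne_zero))
  · rw [hnvw, hcross, inv_smul_smul₀ hs_pos.ne']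
  · rw [hnvw, hvw, inv_smul_smul₀ hs_pos.ne']
end

section
/- For every α with 0 < α < 1, the 2-dimensional Lebesgue measure of the set {w ∈ ℂ : Im(w) > 0, |w| < √2, |w² + 2 − |w|²|² < 4(1 − α²)} equals π(1 − α). (Writing w = x + iy, the defining inequality is equivalent to (1 − y²)² + x²y² < 1 − α².) -/
/-!
With `β = √(1 - α²)`, the condition on `w = x + iy` reads `(1 - y²)² + x²y² < β²`, which for
`y > 0` already forces `x² + y² < 2`. So the region is `{√(1-β) < y < √(1+β), |x| < h(y)}` with
`h(y) = √(β² - (y² - 1)²) / y`, and its area is `∫ 2 h(y) dy`. The substitution `t = y² - 1`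
turns this into `∫_{-β}^{β} √(β² - t²) / (1 + t) dt`, which an explicit antiderivative evaluates
to `π (1 - √(1 - β²)) = π (1 - α)`.
-/

open scoped Real
open MeasureTheory Set Real

theorem HasDerivAt.arcsin_of_one_sub_sq_eq {f : ℝ → ℝ} {f' r x : ℝ} (hf : HasDerivAt f f' x)
    (hr : 0 < r) (h : 1 - f x ^ 2 = r ^ 2) : HasDerivAt (fun y => arcsin (f y)) (f' / r) x := by
  have hlt : f x ^ 2 < 1 := by nlinarith
  have h₁ : f x ≠ -1 := fun h' => by simp [h'] at hlt
  have h₂ : f x ≠ 1 := fun h' => by simp [h'] at hlt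
  have := (Real.hasDerivAt_arcsin h₁ h₂).comp x hf
  rwa [h, Real.sqrt_sq hr.le, one_div, inv_mul_eq_div] at this

theorem abs_lt_sqrt_div_iff {x y c : ℝ} (hy : 0 < y) : |x| < √c / y ↔ x ^ 2 * y ^ 2 < c := by
  rw [lt_div_iff₀ hy, Real.lt_sqrt (by positivity), mul_pow, sq_abs]

theorem Complex.norm_lt_sqrt_iff {c : ℝ} {w : ℂ} : ‖w‖ < √c ↔ w.re ^ 2 + w.im ^ 2 < c := by
  rw [Complex.norm_def, sqrt_lt_sqrt_iff (Complex.normSq_nonneg w), Complex.normSq_apply, sq, sq]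

theorem Complex.volume_setOf_im_mem_abs_re_lt {s : Set ℝ} {g : ℝ → ℝ} (hs : MeasurableSet s)
    (hg : IntegrableOn g s) (hg0 : ∀ y ∈ s, 0 ≤ g y) :
    volume {w : ℂ | w.im ∈ s ∧ |w.re| < g w.im} = ENNReal.ofReal (∫ y in s, 2 * g y) := by
  have hpres : MeasurePreserving (Complex.measurableEquivRealProd.trans MeasurableEquiv.prodComm) :=
    Measure.measurePreserving_swap.comp Complex.volume_preserving_equiv_real_prod
  have hset : {w : ℂ | w.im ∈ s ∧ |w.re| < g w.im} =
      (Complex.measurableEquivRealProd.trans MeasurableEquiv.prodComm) ⁻¹'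
        regionBetween (-g) g s := by
    ext w
    simp only [abs_lt, mem_ofPred_eq, regionBetween, Pi.neg_apply, mem_Ioo, preimage_ofPred_eq,
      MeasurableEquiv.trans_apply, measurableEquivRealProd_apply]
    rfl
  rw [hset, hpres.measure_preimage_equiv, Measure.volume_eq_prod,
    volume_regionBetween_eq_integral hg.neg hg hs fun y hy => by
      simpa using neg_le_self (hg0 y hy)]
  congr 2 with y
  simp only [Pi.sub_apply, Pi.neg_apply]
  ring

noncomputable def antiderivSqrtSqSubSqDivOneAdd (β t : ℝ) : ℝ :=
  √(β ^ 2 - t ^ 2) + arcsin (t / β) - √(1 - β ^ 2) * arcsin ((β ^ 2 + t) / (β * (1 + t)))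

theorem hasDerivAt_antiderivSqrtSqSubSqDivOneAdd {β t : ℝ} (hβ1 : β < 1)
    (ht : t ∈ Ioo (-β) β) :
    HasDerivAt (antiderivSqrtSqSubSqDivOneAdd β) (√(β ^ 2 - t ^ 2) / (1 + t)) t := by
  obtain ⟨htl, htr⟩ := ht
  have hβ : 0 < β := by linarith
  set α := √(1 - β ^ 2)
  have hα2 : α ^ 2 = 1 - β ^ 2 := Real.sq_sqrt (by nlinarith)
  have hα : 0 < α := Real.sqrt_pos.2 (by nlinarith)
  have ht1 : 0 < 1 + t := by linarith
  set s := √(β ^ 2 - t ^ 2)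
  have hs2 : s ^ 2 = β ^ 2 - t ^ 2 := Real.sq_sqrt (by nlinarith)
  have hD : 0 < β ^ 2 - t ^ 2 := by nlinarith
  have hs : 0 < s := Real.sqrt_pos.2 hD
  have hsqrt : HasDerivAt (fun t => √(β ^ 2 - t ^ 2)) (-(2 * t) / (2 * s)) t := by
    simpa using ((hasDerivAt_pow 2 t).const_sub (β ^ 2)).sqrt hD.ne'
  have hasin₁ : HasDerivAt (fun t => arcsin (t / β)) (1 / β / (s / β)) t := by
    refine ((hasDerivAt_id' t).div_const β).arcsin_of_one_sub_sq_eq (div_pos hs hβ) ?_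
    field_simp
    linarith
  have hu : HasDerivAt (fun t => (β ^ 2 + t) / (β * (1 + t)))
      (α ^ 2 / (β * (1 + t) ^ 2)) t := by
    refine (((hasDerivAt_id' t).const_add (β ^ 2)).div
      (((hasDerivAt_id' t).const_add 1).const_mul β) (by positivity)).congr_deriv ?_
    field_simp
    linear_combination -hα2
  -- `1 - ((β² + t) / (β (1 + t)))² = (1 - β²)(β² - t²) / (β (1 + t))²`
  have hasin₂ := hu.arcsin_of_one_sub_sq_eq (r := α * s / (β * (1 + t))) (by positivity) (by
    field_simp
    linear_combination (t ^ 2 - β ^ 2) * hα2 - α ^ 2 * hs2)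
  refine ((hsqrt.add hasin₁).sub (hasin₂.const_mul α)).congr_deriv ?_
  field_simp
  linear_combination -hα2 - hs2

theorem integral_sqrt_sq_sub_sq_div_one_add {β : ℝ} (hβ0 : 0 < β) (hβ1 : β < 1) :
    ∫ t in -β..β, √(β ^ 2 - t ^ 2) / (1 + t) = π * (1 - √(1 - β ^ 2)) := by
  have hcont : ContinuousOn (antiderivSqrtSqSubSqDivOneAdd β) (Icc (-β) β) := by
    have hden : ∀ t ∈ Icc (-β) β, β * (1 + t) ≠ 0 := fun t ht =>
      (mul_pos hβ0 (by linarith [ht.1])).ne'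
    unfold antiderivSqrtSqSubSqDivOneAdd
    fun_prop (disch := assumption)
  have hint : IntervalIntegrable (fun t => √(β ^ 2 - t ^ 2) / (1 + t)) volume (-β) β := by
    refine ContinuousOn.intervalIntegrable (ContinuousOn.div (by fun_prop) (by fun_prop) ?_)
    intro t ht
    rw [uIcc_of_le (by linarith)] at ht
    linarith [ht.1]
  rw [intervalIntegral.integral_eq_sub_of_hasDerivAt_of_le (by linarith) hcont
    (fun t ht => hasDerivAt_antiderivSqrtSqSubSqDivOneAdd hβ1 ht) hint]
  have h₁ : (β ^ 2 + β) / (β * (1 + β)) = 1 := by field_simp; ring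
  have h₂ : (β ^ 2 + -β) / (β * (1 + -β)) = -1 := by
    rw [div_eq_iff (by nlinarith)]; ring
  simp only [antiderivSqrtSqSubSqDivOneAdd, neg_sq, sub_self, Real.sqrt_zero,
    div_self hβ0.ne', neg_div, h₁, h₂, arcsin_one, arcsin_neg_one]
  ring

theorem integral_two_mul_sqrt_sq_sub_sq_sub_one_div {β : ℝ} (hβ0 : 0 < β) (hβ1 : β < 1) :
    ∫ y in √(1 - β)..√(1 + β), 2 * (√(β ^ 2 - (y ^ 2 - 1) ^ 2) / y) =
      π * (1 - √(1 - β ^ 2)) := by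
  have ha : 0 < √(1 - β) := Real.sqrt_pos.2 (by linarith)
  have hab : √(1 - β) ≤ √(1 + β) := Real.sqrt_le_sqrt (by linarith)
  have hcont : ContinuousOn (fun t => √(β ^ 2 - t ^ 2) / (1 + t))
      ((fun y => y ^ 2 - 1) '' uIcc √(1 - β) √(1 + β)) := by
    refine ContinuousOn.div (by fun_prop) (by fun_prop) ?_
    rintro _ ⟨y, hy, rfl⟩
    rw [uIcc_of_le hab] at hy
    have hy0 : 0 < y := ha.trans_le hy.1
    rw [add_sub_cancel]
    positivity
  have hsubst := intervalIntegral.integral_comp_mul_deriv' (f' := fun y => 2 * y)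
    (fun y _ => by simpa using (hasDerivAt_pow 2 y).sub_const 1) (by fun_prop) hcont
  rw [Real.sq_sqrt (by linarith), Real.sq_sqrt (by linarith), sub_sub_cancel_left,
    add_sub_cancel_left] at hsubst
  rw [← integral_sqrt_sq_sub_sq_div_one_add hβ0 hβ1, ← hsubst]
  refine intervalIntegral.integral_congr fun y hy => ?_
  rw [uIcc_of_le hab] at hy
  have hy0 : y ≠ 0 := (ha.trans_le hy.1).ne'
  simp only [Function.comp_apply, add_sub_cancel]
  field_simp

theorem mem_Ioo_sqrt_and_abs_lt_iff {β x y : ℝ} (hβ0 : 0 ≤ β) (hβ1 : β ≤ 1) :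
    (y ∈ Ioo √(1 - β) √(1 + β) ∧ |x| < √(β ^ 2 - (y ^ 2 - 1) ^ 2) / y) ↔
      0 < y ∧ x ^ 2 + y ^ 2 < 2 ∧ (1 - y ^ 2) ^ 2 + x ^ 2 * y ^ 2 < β ^ 2 := by
  constructor
  · rintro ⟨⟨hya, -⟩, hx⟩
    have hy : 0 < y := (Real.sqrt_nonneg _).trans_lt hya
    rw [abs_lt_sqrt_div_iff hy] at hx
    have hx2 : x ^ 2 * y ^ 2 < (2 - y ^ 2) * y ^ 2 := by nlinarith
    exact ⟨hy, by linarith [lt_of_mul_lt_mul_right hx2 (sq_nonneg y)], by nlinarith⟩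
  · rintro ⟨hy, -, h⟩
    have hx : x ^ 2 * y ^ 2 < β ^ 2 - (y ^ 2 - 1) ^ 2 := by nlinarith
    have hy2 : |y ^ 2 - 1| < β := abs_lt_of_sq_lt_sq (by nlinarith [sq_nonneg (x * y)]) hβ0
    rw [abs_lt] at hy2
    exact ⟨⟨(Real.sqrt_lt' hy).2 (by linarith), (Real.lt_sqrt hy.le).2 (by linarith)⟩,
      (abs_lt_sqrt_div_iff hy).2 hx⟩

theorem Complex.norm_sq_sq_add_two_sub_ofReal_norm_sq (w : ℂ) :
    ‖w ^ 2 + 2 - ((‖w‖ ^ 2 : ℝ) : ℂ)‖ ^ 2 = 4 * ((1 - w.im ^ 2) ^ 2 + w.re ^ 2 * w.im ^ 2) := by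
  rw [Complex.sq_norm, Complex.normSq_apply, Complex.sq_norm, Complex.normSq_apply]
  simp only [Complex.sub_re, Complex.add_re, Complex.ofReal_re, Complex.sub_im,
    Complex.add_im, Complex.ofReal_im, sq, Complex.mul_re, Complex.mul_im,
    Complex.re_ofNat, Complex.im_ofNat]
  ring

/-- Lemma 3.5: for `0 < α < 1`, the Lebesgue area of the region
`{w ∈ ℂ : Im w > 0, |w| < √2, |w² + 2 − |w|²|² < 4(1 − α²)}` equals `π(1 − α)`. -/
theorem area_of_region (α : ℝ) (hα0 : 0 < α) (hα1 : α < 1) :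
    MeasureTheory.volume
        {w : ℂ | 0 < w.im ∧ ‖w‖ < Real.sqrt 2 ∧
          (‖w ^ 2 + 2 - ((‖w‖ ^ 2 : ℝ) : ℂ)‖) ^ 2 < 4 * (1 - α ^ 2)} =
      ENNReal.ofReal (π * (1 - α)) := by
  set β := √(1 - α ^ 2)
  have hβ2 : β ^ 2 = 1 - α ^ 2 := Real.sq_sqrt (by nlinarith)
  have hβ0 : 0 < β := Real.sqrt_pos.2 (by nlinarith)
  have hβ1 : β < 1 := by nlinarith
  have hα : √(1 - β ^ 2) = α := by rw [hβ2, sub_sub_cancel, Real.sqrt_sq hα0.le]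
  have hregion : {w : ℂ | 0 < w.im ∧ ‖w‖ < Real.sqrt 2 ∧
      (‖w ^ 2 + 2 - ((‖w‖ ^ 2 : ℝ) : ℂ)‖) ^ 2 < 4 * (1 - α ^ 2)} =
      {w : ℂ | w.im ∈ Ioo √(1 - β) √(1 + β) ∧ |w.re| < √(β ^ 2 - (w.im ^ 2 - 1) ^ 2) / w.im} := by
    ext w
    rw [mem_ofPred_eq, mem_ofPred_eq, mem_Ioo_sqrt_and_abs_lt_iff hβ0.le hβ1.le,
      Complex.norm_lt_sqrt_iff, Complex.norm_sq_sq_add_two_sub_ofReal_norm_sq, ← hβ2,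
      mul_lt_mul_iff_right₀ four_pos]
  have ha : 0 < √(1 - β) := Real.sqrt_pos.2 (by linarith)
  have hcont : ContinuousOn (fun y => √(β ^ 2 - (y ^ 2 - 1) ^ 2) / y) (Icc √(1 - β) √(1 + β)) :=
    ContinuousOn.div (by fun_prop) (by fun_prop) fun y hy => (ha.trans_le hy.1).ne'
  rw [hregion, Complex.volume_setOf_im_mem_abs_re_lt measurableSet_Ioo
      (hcont.integrableOn_Icc.mono_set Ioo_subset_Icc_self)
      fun y hy => div_nonneg (Real.sqrt_nonneg _) (ha.trans hy.1).le,
    ← integral_Ioc_eq_integral_Ioo,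
    ← intervalIntegral.integral_of_le (Real.sqrt_le_sqrt (by linarith)),
    integral_two_mul_sqrt_sq_sub_sq_sub_one_div hβ0 hβ1, hα]
end

section
/- Let 0 < r < 1, let k, m be natural numbers, let θ ∈ ℝ, x ∈ S^k ⊂ ℝ^{k+1}, y ∈ S^m ⊂ ℝ^{m+1}, and set ζ = √(2 − 2r)·e^{−iθ} ∈ ℂ and w = (ix, y) ∈ ℂ^{k+m+2}. Then |ζ|² = 2 − 2r, and: e^{iθ}·√(1 − |ζ|²/4)·ζ = √(1 − r²), and e^{iθ}·((1 − |ζ|²/4)·w − (ζ²/4)·w̄) = ((−r·sinθ + i·cosθ)·x, (r·cosθ + i·sinθ)·y), where w̄ denotes the componentwise complex conjugate. -/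
/-! Write `ζ = ρ e^{-iθ}` with `ρ² = 2 − 2r`. Multiplying the fibre coordinate
`(1 − |ζ|²/4) w − (ζ²/4) w̄` by `e^{iθ}` turns it into
`((1+r)/2) e^{iθ} w − ((1−r)/2) e^{−iθ} w̄`. On the real part `y` of `w` this is `y` times
`r cos θ + i sin θ`; on the imaginary part `ix`, where `w̄ = −w`, it is `ix` times
`cos θ + i r sin θ`. -/

open Complex ComplexConjugate

lemma norm_ofReal_mul_exp_neg_mul_I_sq (ρ θ : ℝ) :
    ‖(ρ : ℂ) * exp (-(θ : ℂ) * I)‖ ^ 2 = ρ ^ 2 := by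
  rw [← ofReal_neg, norm_mul, norm_exp_ofReal_mul_I, norm_real, Real.norm_eq_abs, mul_one, sq_abs]

lemma exp_mul_I_mul_exp_neg_mul_I (θ : ℂ) : exp (θ * I) * exp (-θ * I) = 1 := by
  rw [neg_mul, exp_neg, mul_inv_cancel₀ (exp_ne_zero _)]

lemma exp_mul_I_mul_fibre (ρ θ : ℝ) (z : ℂ) :
    exp ((θ : ℂ) * I) * (((1 - ‖(ρ : ℂ) * exp (-(θ : ℂ) * I)‖ ^ 2 / 4 : ℝ) : ℂ) * z
        - ((ρ : ℂ) * exp (-(θ : ℂ) * I)) ^ 2 / 4 * conj z) =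
      (1 - (ρ : ℂ) ^ 2 / 4) * exp ((θ : ℂ) * I) * z
        - (ρ : ℂ) ^ 2 / 4 * exp (-(θ : ℂ) * I) * conj z := by
  rw [norm_ofReal_mul_exp_neg_mul_I_sq]
  push_cast
  linear_combination (-(ρ : ℂ) ^ 2 / 4 * exp (-(θ : ℂ) * I) * conj z) *
    exp_mul_I_mul_exp_neg_mul_I θ

lemma weighted_exp_add_exp_neg (r θ : ℂ) :
    (1 + r) / 2 * exp (θ * I) + (1 - r) / 2 * exp (-θ * I) =
      cos θ + r * sin θ * I := by
  rw [exp_mul_I, exp_mul_I, cos_neg, sin_neg]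
  ring

lemma weighted_exp_sub_exp_neg (r θ : ℂ) :
    (1 + r) / 2 * exp (θ * I) - (1 - r) / 2 * exp (-θ * I) =
      r * cos θ + sin θ * I := by
  rw [exp_mul_I, exp_mul_I, cos_neg, sin_neg]
  ring

theorem prop_6_1_core_general (r : ℝ) (hr1 : r < 1) (k m : ℕ) (θ : ℝ)
    (x : EuclideanSpace ℝ (Fin (k + 1))) (y : EuclideanSpace ℝ (Fin (m + 1)))
    (ζ : ℂ) (hζ : ζ = (Real.sqrt (2 - 2 * r) : ℝ) * Complex.exp (-(θ : ℂ) * Complex.I))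
    (w : Fin (k + 1) ⊕ Fin (m + 1) → ℂ)
    (hw : w = Sum.elim (fun a => Complex.I * (x a : ℝ)) (fun b => ((y b : ℝ) : ℂ))) :
    ‖ζ‖ ^ 2 = 2 - 2 * r ∧
    Complex.exp ((θ : ℂ) * Complex.I) *
        ((Real.sqrt (1 - ‖ζ‖ ^ 2 / 4) : ℝ) * ζ) =
      ((Real.sqrt (1 - r ^ 2) : ℝ) : ℂ) ∧
    ∀ i, Complex.exp ((θ : ℂ) * Complex.I) *
        (((1 - ‖ζ‖ ^ 2 / 4 : ℝ) : ℂ) * w i - ζ ^ 2 / 4 * (starRingEnd ℂ) (w i)) =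
      Sum.elim
        (fun a => (((-r * Real.sin θ : ℝ) : ℂ) + ((Real.cos θ : ℝ) : ℂ) * Complex.I) * (x a : ℝ))
        (fun b => (((r * Real.cos θ : ℝ) : ℂ) + ((Real.sin θ : ℝ) : ℂ) * Complex.I) * (y b : ℝ))
        i := by
  have hρ : Real.sqrt (2 - 2 * r) ^ 2 = 2 - 2 * r := Real.sq_sqrt (by linarith)
  have hρℂ : ((Real.sqrt (2 - 2 * r) : ℝ) : ℂ) ^ 2 = 2 - 2 * r := by exact_mod_cast hρ
  have hnorm : ‖ζ‖ ^ 2 = 2 - 2 * r := by rw [hζ, norm_ofReal_mul_exp_neg_mul_I_sq, hρ]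
  refine ⟨hnorm, ?_, ?_⟩
  · have hsqrt :
        Real.sqrt (1 - (2 - 2 * r) / 4) * Real.sqrt (2 - 2 * r) = Real.sqrt (1 - r ^ 2) := by
      rw [← Real.sqrt_mul' _ (by linarith)]
      ring_nf
    rw [hnorm, hζ, ← hsqrt]
    push_cast
    linear_combination (Real.sqrt (1 - (2 - 2 * r) / 4) * Real.sqrt (2 - 2 * r) : ℂ) *
      exp_mul_I_mul_exp_neg_mul_I θ
  · intro i
    rw [hζ, exp_mul_I_mul_fibre, hρℂ]
    rcases i with a | b
    · simp only [hw, Sum.elim_inl, map_mul, conj_I, conj_ofReal]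
      push_cast
      linear_combination (I * x a) * weighted_exp_add_exp_neg r θ + r * x a * sin θ * I_sq
    · simp only [hw, Sum.elim_inr, conj_ofReal]
      push_cast
      linear_combination (y b : ℂ) * weighted_exp_sub_exp_neg r θ

/-- The computational core of Proposition 6.1: for `0 < r < 1`, `x ∈ S^k`, `y ∈ S^m`,
setting `ζ = √(2−2r)·e^{−iθ}` and `w = (ix, y) ∈ ℂ^{k+m+2}`, one has `|ζ|² = 2 − 2r`,
`e^{iθ}·√(1 − |ζ|²/4)·ζ = √(1 − r²)`, and
`e^{iθ}·((1 − |ζ|²/4)·w − (ζ²/4)·w̄) = ((−r sinθ + i cosθ)·x, (r cosθ + i sinθ)·y)`. -/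
theorem prop_6_1_core (r : ℝ) (hr0 : 0 < r) (hr1 : r < 1) (k m : ℕ) (θ : ℝ)
    (x : EuclideanSpace ℝ (Fin (k + 1))) (y : EuclideanSpace ℝ (Fin (m + 1)))
    (hx : ‖x‖ = 1) (hy : ‖y‖ = 1)
    (ζ : ℂ) (hζ : ζ = (Real.sqrt (2 - 2 * r) : ℝ) * Complex.exp (-(θ : ℂ) * Complex.I))
    (w : Fin (k + 1) ⊕ Fin (m + 1) → ℂ)
    (hw : w = Sum.elim (fun a => Complex.I * (x a : ℝ)) (fun b => ((y b : ℝ) : ℂ))) :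
    ‖ζ‖ ^ 2 = 2 - 2 * r ∧
    Complex.exp ((θ : ℂ) * Complex.I) *
        ((Real.sqrt (1 - ‖ζ‖ ^ 2 / 4) : ℝ) * ζ) =
      ((Real.sqrt (1 - r ^ 2) : ℝ) : ℂ) ∧
    ∀ i, Complex.exp ((θ : ℂ) * Complex.I) *
        (((1 - ‖ζ‖ ^ 2 / 4 : ℝ) : ℂ) * w i - ζ ^ 2 / 4 * (starRingEnd ℂ) (w i)) =
      Sum.elim
        (fun a => (((-r * Real.sin θ : ℝ) : ℂ) + ((Real.cos θ : ℝ) : ℂ) * Complex.I) * (x a : ℝ))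
        (fun b => (((r * Real.cos θ : ℝ) : ℂ) + ((Real.sin θ : ℝ) : ℂ) * Complex.I) * (y b : ℝ))
        i :=
  prop_6_1_core_general r hr1 k m θ x y ζ hζ w hw
end

section
/- Let n ≥ 1, let w ∈ ℂⁿ satisfy ∑_j w_j² = 0 and ∑_j |w_j|² = 2, and let ζ ∈ ℂ with |ζ| < √2. Define z ∈ ℂ^{n+1} by z₀ = √(1 − |ζ|²/4)·ζ and (z₁, …, z_n) = (1 − |ζ|²/4)·w − (ζ²/4)·w̄, where w̄ is the componentwise complex conjugate. Then ∑_{j=0}^{n} |z_j|² = 2 and ∑_{j=0}^{n} z_j² = 0. -/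
/-!
Write `a = 1 - |ζ|²/4` and `b = ζ²/4`. Expanding `∑ (a w_j - b w̄_j)²` and `∑ |a w_j - b w̄_j|²`,
every term containing `∑ w_j²` or its conjugate `∑ w̄_j²` vanishes, leaving `-2ab·∑|w_j|²` and
`(a² + |b|²)·∑|w_j|²`. Since `z₀² = a ζ²` and `|z₀|² = a |ζ|²`, both identities reduce to
`aζ² - 4ab = 0` and `a|ζ|² + 2(a² + |ζ|⁴/16) = 2`, which hold as polynomial identities in `|ζ|`.
-/

open ComplexConjugate

theorem Complex.sum_conj_sq_eq_zero {ι : Type*} [Fintype ι] {w : ι → ℂ}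
    (hw : ∑ j, w j ^ 2 = 0) : ∑ j, conj (w j) ^ 2 = 0 := by
  simpa [map_sum] using congrArg conj hw

theorem Complex.sum_sq_mul_sub_mul_conj {ι : Type*} [Fintype ι] {w : ι → ℂ}
    (hw : ∑ j, w j ^ 2 = 0) (a b : ℂ) :
    ∑ j, (a * w j - b * conj (w j)) ^ 2 = -2 * a * b * ∑ j, (‖w j‖ ^ 2 : ℂ) := by
  have expand : ∑ j, (a * w j - b * conj (w j)) ^ 2 = a ^ 2 * ∑ j, w j ^ 2
      + b ^ 2 * ∑ j, conj (w j) ^ 2 - 2 * a * b * ∑ j, w j * conj (w j) := by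
    simp only [Finset.mul_sum, ← Finset.sum_add_distrib, ← Finset.sum_sub_distrib]
    exact Finset.sum_congr rfl fun j _ => by ring
  simp only [expand, hw, Complex.sum_conj_sq_eq_zero hw, Complex.mul_conj']
  ring

theorem Complex.sum_norm_sq_ofReal_mul_sub_mul_conj {ι : Type*} [Fintype ι] {w : ι → ℂ}
    (hw : ∑ j, w j ^ 2 = 0) (a : ℝ) (b : ℂ) :
    ∑ j, ‖a * w j - b * conj (w j)‖ ^ 2 = (a ^ 2 + ‖b‖ ^ 2) * ∑ j, ‖w j‖ ^ 2 := by
  apply Complex.ofReal_injective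
  have expand : ∑ j, (a * w j - b * conj (w j)) * conj (a * w j - b * conj (w j))
      = (a ^ 2 + b * conj b) * ∑ j, w j * conj (w j)
        - a * conj b * ∑ j, w j ^ 2 - a * b * ∑ j, conj (w j) ^ 2 := by
    simp only [map_sub, map_mul, Complex.conj_ofReal, Complex.conj_conj, Finset.mul_sum,
      ← Finset.sum_sub_distrib]
    exact Finset.sum_congr rfl fun j _ => by ring
  push_cast
  simp only [← Complex.mul_conj', expand, hw, Complex.sum_conj_sq_eq_zero hw]
  ring

theorem theta_Q_lands_in_quadric_general (n : ℕ) (w : Fin n → ℂ)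
    (hw2 : ∑ j, (w j) ^ 2 = 0) (hwnorm : ∑ j, ‖w j‖ ^ 2 = 2)
    (ζ : ℂ) (hζ : ‖ζ‖ < Real.sqrt 2)
    (z : Fin (n + 1) → ℂ)
    (hz : z = Fin.cons (((Real.sqrt (1 - ‖ζ‖ ^ 2 / 4) : ℝ) : ℂ) * ζ)
      (fun j => ((1 - ‖ζ‖ ^ 2 / 4 : ℂ)) * w j - ζ ^ 2 / 4 * (starRingEnd ℂ) (w j))) :
    (∑ j, ‖z j‖ ^ 2) = 2 ∧ (∑ j, (z j) ^ 2) = 0 := by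
  have coeff_nonneg : 0 ≤ 1 - ‖ζ‖ ^ 2 / 4 := by
    have := (Real.lt_sqrt (norm_nonneg ζ)).1 hζ
    linarith
  have hcoe : (1 - ‖ζ‖ ^ 2 / 4 : ℂ) = ((1 - ‖ζ‖ ^ 2 / 4 : ℝ) : ℂ) := by push_cast; rfl
  have hwnorm_coe : ∑ j, (‖w j‖ ^ 2 : ℂ) = 2 := by exact_mod_cast hwnorm
  have head_norm_sq : ‖((√(1 - ‖ζ‖ ^ 2 / 4) : ℝ) : ℂ) * ζ‖ ^ 2 = (1 - ‖ζ‖ ^ 2 / 4) * ‖ζ‖ ^ 2 := by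
    rw [norm_mul, Complex.norm_real, Real.norm_of_nonneg (Real.sqrt_nonneg _), mul_pow,
      Real.sq_sqrt coeff_nonneg]
  have head_sq : (((√(1 - ‖ζ‖ ^ 2 / 4) : ℝ) : ℂ) * ζ) ^ 2 = (1 - ‖ζ‖ ^ 2 / 4 : ℂ) * ζ ^ 2 := by
    rw [mul_pow, ← Complex.ofReal_pow, Real.sq_sqrt coeff_nonneg, hcoe]
  subst hz
  simp only [Fin.sum_univ_succ, Fin.cons_zero, Fin.cons_succ]
  constructor
  · rw [head_norm_sq, hcoe, Complex.sum_norm_sq_ofReal_mul_sub_mul_conj hw2, hwnorm]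
    simp only [norm_div, norm_pow, Complex.norm_ofNat]
    ring
  · rw [head_sq, Complex.sum_sq_mul_sub_mul_conj hw2, hwnorm_coe]
    ring

/-- The disk-bundle map `Θ_Q` of Section 4.2 takes values in the quadric: if
`w ∈ ℂⁿ` satisfies `∑ w_j² = 0` and `∑ |w_j|² = 2` and `|ζ| < √2`, then the vector
`z = (√(1 − |ζ|²/4)·ζ, (1 − |ζ|²/4)·w − (ζ²/4)·w̄) ∈ ℂ^{n+1}` satisfies
`∑ |z_j|² = 2` and `∑ z_j² = 0`. -/
theorem theta_Q_lands_in_quadric (n : ℕ) (hn : 1 ≤ n) (w : Fin n → ℂ)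
    (hw2 : ∑ j, (w j) ^ 2 = 0) (hwnorm : ∑ j, ‖w j‖ ^ 2 = 2)
    (ζ : ℂ) (hζ : ‖ζ‖ < Real.sqrt 2)
    (z : Fin (n + 1) → ℂ)
    (hz : z = Fin.cons (((Real.sqrt (1 - ‖ζ‖ ^ 2 / 4) : ℝ) : ℂ) * ζ)
      (fun j => ((1 - ‖ζ‖ ^ 2 / 4 : ℂ)) * w j - ζ ^ 2 / 4 * (starRingEnd ℂ) (w j))) :
    (∑ j, ‖z j‖ ^ 2) = 2 ∧ (∑ j, (z j) ^ 2) = 0 :=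
  theta_Q_lands_in_quadric_general n w hw2 hwnorm ζ hζ z hz
end

section
/- Let n ≥ 1, let w ∈ ℂⁿ satisfy ∑_j w_j² = 0 and ∑_j |w_j|² = 2, and let ζ ∈ ℂ with |ζ| < 1. Define z ∈ ℂⁿ by z = √(1 − |ζ|²/2)·w − (ζ/√2)·w̄, where w̄ is the componentwise complex conjugate. Then ∑_j |z_j|² = 2 and (1/2)·√(4 − |∑_j z_j²|²) = 1 − |ζ|². -/
/-! Isotropy `∑ w_j² = 0` says exactly that `w` and `w̄` are Hermitian-orthogonal, and they have
the same norm. Hence for `z = a w + b w̄` one gets `∑ |z_j|² = (|a|² + |b|²) ∑ |w_j|²` and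
`∑ z_j² = 2ab ∑ |w_j|²`. With `|a|² = 1 − |ζ|²/2` and `|b|² = |ζ|²/2` this gives `∑ |z_j|² = 2`
and `4 − |∑ z_j²|² = 4 − 16 |a|²|b|² = 4 (1 − |ζ|²)²`. -/

open ComplexConjugate

namespace Complex

variable {ι : Type*} [Fintype ι] {w : ι → ℂ}

theorem sum_sq_add_conj_of_isotropic (hw : ∑ j, w j ^ 2 = 0) (a b : ℂ) :
    ∑ j, (a * w j + b * conj (w j)) ^ 2 = 2 * a * b * ((∑ j, ‖w j‖ ^ 2 : ℝ) : ℂ) := by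
  have hw' : ∑ j, conj (w j) ^ 2 = 0 := by simpa [map_sum] using congrArg conj hw
  have expand : ∑ j, (a * w j + b * conj (w j)) ^ 2 =
      a ^ 2 * ∑ j, w j ^ 2 + b ^ 2 * ∑ j, conj (w j) ^ 2 + 2 * a * b * ∑ j, w j * conj (w j) := by
    simp only [Finset.mul_sum, ← Finset.sum_add_distrib]
    exact Finset.sum_congr rfl fun j _ => by ring
  simp [expand, hw, hw', mul_conj']

theorem sum_norm_sq_add_conj_of_isotropic (hw : ∑ j, w j ^ 2 = 0) (a b : ℂ) :
    ∑ j, ‖a * w j + b * conj (w j)‖ ^ 2 = (‖a‖ ^ 2 + ‖b‖ ^ 2) * ∑ j, ‖w j‖ ^ 2 := by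
  have hw' : ∑ j, conj (w j) ^ 2 = 0 := by simpa [map_sum] using congrArg conj hw
  have expand : ∑ j, (a * w j + b * conj (w j)) * conj (a * w j + b * conj (w j)) =
      (a * conj a + b * conj b) * ∑ j, w j * conj (w j) + a * conj b * ∑ j, w j ^ 2
        + b * conj a * ∑ j, conj (w j) ^ 2 := by
    simp only [Finset.mul_sum, ← Finset.sum_add_distrib, map_add, map_mul, conj_conj]
    exact Finset.sum_congr rfl fun j _ => by ring
  simp only [hw, hw', mul_conj', mul_zero, add_zero] at expand
  exact_mod_cast expand

end Complex

theorem theta_p_moment_map_norm_general (n : ℕ) (w : Fin n → ℂ)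
    (hw2 : ∑ j, (w j) ^ 2 = 0) (hwnorm : ∑ j, ‖w j‖ ^ 2 = 2)
    (ζ : ℂ) (hζ : ‖ζ‖ < 1)
    (z : Fin n → ℂ)
    (hz : z = fun j => ((Real.sqrt (1 - ‖ζ‖ ^ 2 / 2) : ℝ) : ℂ) * w j -
      ζ / ((Real.sqrt 2 : ℝ) : ℂ) * (starRingEnd ℂ) (w j)) :
    (∑ j, ‖z j‖ ^ 2) = 2 ∧
    (1 / 2) * Real.sqrt (4 - ‖∑ j, (z j) ^ 2‖ ^ 2) = 1 - ‖ζ‖ ^ 2 := by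
  set a : ℂ := ((Real.sqrt (1 - ‖ζ‖ ^ 2 / 2) : ℝ) : ℂ)
  set b : ℂ := -(ζ / ((Real.sqrt 2 : ℝ) : ℂ))
  have hζ2 : ‖ζ‖ ^ 2 < 1 := by nlinarith [norm_nonneg ζ]
  have ha : ‖a‖ ^ 2 = 1 - ‖ζ‖ ^ 2 / 2 := by
    rw [Complex.norm_real, Real.norm_eq_abs, sq_abs, Real.sq_sqrt (by linarith)]
  have hb : ‖b‖ ^ 2 = ‖ζ‖ ^ 2 / 2 := by
    rw [norm_neg, norm_div, Complex.norm_real, Real.norm_eq_abs, div_pow, sq_abs,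
      Real.sq_sqrt zero_le_two]
  obtain rfl : z = fun j => a * w j + b * conj (w j) := by
    rw [hz]; ext j; ring
  refine ⟨by rw [Complex.sum_norm_sq_add_conj_of_isotropic hw2, ha, hb, hwnorm]; ring, ?_⟩
  have hnorm_sum_sq : ‖∑ j, (a * w j + b * conj (w j)) ^ 2‖ ^ 2 = 16 * ‖a‖ ^ 2 * ‖b‖ ^ 2 := by
    rw [Complex.sum_sq_add_conj_of_isotropic hw2, hwnorm]
    simp only [norm_mul, Complex.norm_real, Complex.norm_ofNat]
    norm_num
    ring
  rw [hnorm_sum_sq, ha, hb,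
    show 4 - 16 * (1 - ‖ζ‖ ^ 2 / 2) * (‖ζ‖ ^ 2 / 2) = (2 * (1 - ‖ζ‖ ^ 2)) ^ 2 by ring,
    Real.sqrt_sq (by linarith)]
  ring

/-- The core computation of Proposition 7.3: if `w ∈ ℂⁿ` satisfies `∑ w_j² = 0` and
`∑ |w_j|² = 2` and `|ζ| < 1`, then `z = √(1 − |ζ|²/2)·w − (ζ/√2)·w̄` satisfies
`∑ |z_j|² = 2` and `(1/2)·√(4 − |∑ z_j²|²) = 1 − |ζ|²`. -/
theorem theta_p_moment_map_norm (n : ℕ) (hn : 1 ≤ n) (w : Fin n → ℂ)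
    (hw2 : ∑ j, (w j) ^ 2 = 0) (hwnorm : ∑ j, ‖w j‖ ^ 2 = 2)
    (ζ : ℂ) (hζ : ‖ζ‖ < 1)
    (z : Fin n → ℂ)
    (hz : z = fun j => ((Real.sqrt (1 - ‖ζ‖ ^ 2 / 2) : ℝ) : ℂ) * w j -
      ζ / ((Real.sqrt 2 : ℝ) : ℂ) * (starRingEnd ℂ) (w j)) :
    (∑ j, ‖z j‖ ^ 2) = 2 ∧
    (1 / 2) * Real.sqrt (4 - ‖∑ j, (z j) ^ 2‖ ^ 2) = 1 - ‖ζ‖ ^ 2 :=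
  theta_p_moment_map_norm_general n w hw2 hwnorm ζ hζ z hz
end

section
/- Let ε₁, ε₂, ε₃, ε₄, ε₅ ∈ {−1, 1} and define 𝒲 on triples of nonzero complex numbers by 𝒲(x, y, z) = z⁻¹·(ε₁·x + ε₂·x·y⁻¹ + ε₃·x⁻¹·y + ε₄·x⁻¹) + ε₅·z. Suppose x, y, z ∈ ℂ are nonzero and satisfy x² = ε₁ε₄, y² = ε₁ε₂ε₃ε₄, y ≠ −ε₁ε₂, and z² = 2ε₄ε₅·(y + ε₁ε₂)/(x·y). Then (x, y, z) is a critical point of 𝒲: the complex derivatives at x, y, z respectively of the three functions t ↦ 𝒲(t, y, z), t ↦ 𝒲(x, t, z), and t ↦ 𝒲(x, y, t) all vanish. -/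
/-!
In each variable separately `𝒲` has the shape `t ↦ a t + b t⁻¹ + c`, whose derivative
`a - b t⁻²` vanishes at `t₀ ≠ 0` exactly when `a t₀² = b`. Given `x² = ε₁ε₄`, this condition
reduces to `ε₃ y² = ε₂ x²` in the variables `x` and `y`, and reads
`ε₅ z² = ε₁x + ε₂xy⁻¹ + ε₃x⁻¹y + ε₄x⁻¹` in `z`; all of these follow from the relations on
`x², y², z²` because `εᵢ² = 1`.
-/

theorem hasDerivAt_mul_add_mul_inv_add_of_mul_sq_eq {𝕜 : Type*} [NontriviallyNormedField 𝕜]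
    {a b c t₀ : 𝕜} (ht₀ : t₀ ≠ 0) (h : a * t₀ ^ 2 = b) :
    HasDerivAt (fun t => a * t + b * t⁻¹ + c) 0 t₀ := by
  have hderiv := (((hasDerivAt_id t₀).const_mul a).add
    ((hasDerivAt_inv ht₀).const_mul b)).add_const c
  refine hderiv.congr_deriv ?_
  rw [← h]
  field_simp
  ring

theorem superpotential_critical_point_general
    (ε₁ ε₂ ε₃ ε₄ ε₅ : ℂ)
    (h₁ : ε₁ = 1 ∨ ε₁ = -1) (h₃ : ε₃ = 1 ∨ ε₃ = -1)
    (h₅ : ε₅ = 1 ∨ ε₅ = -1)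
    (x y z : ℂ) (hx : x ≠ 0) (hy : y ≠ 0) (hz : z ≠ 0)
    (hx2 : x ^ 2 = ε₁ * ε₄) (hy2 : y ^ 2 = ε₁ * ε₂ * ε₃ * ε₄)
    (hz2 : z ^ 2 = 2 * ε₄ * ε₅ * (y + ε₁ * ε₂) / (x * y)) :
    HasDerivAt
      (fun t : ℂ => z⁻¹ * (ε₁ * t + ε₂ * t * y⁻¹ + ε₃ * t⁻¹ * y + ε₄ * t⁻¹) + ε₅ * z) 0 x ∧
    HasDerivAt
      (fun t : ℂ => z⁻¹ * (ε₁ * x + ε₂ * x * t⁻¹ + ε₃ * x⁻¹ * t + ε₄ * x⁻¹) + ε₅ * z) 0 y ∧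
    HasDerivAt
      (fun t : ℂ => t⁻¹ * (ε₁ * x + ε₂ * x * y⁻¹ + ε₃ * x⁻¹ * y + ε₄ * x⁻¹) + ε₅ * t) 0 z := by
  have hε₁ : ε₁ ^ 2 = 1 := sq_eq_one_iff.mpr h₁
  have hε₃ : ε₃ ^ 2 = 1 := sq_eq_one_iff.mpr h₃
  have hε₅ : ε₅ ^ 2 = 1 := sq_eq_one_iff.mpr h₅
  have hyx : ε₃ * y ^ 2 = ε₂ * x ^ 2 := by
    linear_combination ε₃ * hy2 - ε₂ * hx2 + ε₁ * ε₂ * ε₄ * hε₃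
  refine ⟨?_, ?_, ?_⟩
  · refine (hasDerivAt_mul_add_mul_inv_add_of_mul_sq_eq (a := z⁻¹ * (ε₁ + ε₂ * y⁻¹))
      (b := z⁻¹ * (ε₃ * y + ε₄)) (c := ε₅ * z) hx ?_)
      |>.congr_of_eventuallyEq (.of_forall fun t => by ring)
    field_simp
    linear_combination y * ε₁ * hx2 - hyx + ε₄ * y * hε₁
  · refine (hasDerivAt_mul_add_mul_inv_add_of_mul_sq_eq (a := z⁻¹ * (ε₃ * x⁻¹))
      (b := z⁻¹ * (ε₂ * x)) (c := z⁻¹ * (ε₁ * x + ε₄ * x⁻¹) + ε₅ * z) hy ?_)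
      |>.congr_of_eventuallyEq (.of_forall fun t => by ring)
    field_simp
    linear_combination hyx
  · refine (hasDerivAt_mul_add_mul_inv_add_of_mul_sq_eq (a := ε₅)
      (b := ε₁ * x + ε₂ * x * y⁻¹ + ε₃ * x⁻¹ * y + ε₄ * x⁻¹) (c := 0) hz ?_)
      |>.congr_of_eventuallyEq (.of_forall fun t => by ring)
    rw [hz2]
    field_simp
    linear_combination 2 * ε₄ * (y + ε₁ * ε₂) * hε₅ - ε₁ * y * hx2 - ε₂ * hx2 - ε₃ * hy2
      - ε₄ * y * hε₁ - ε₁ * ε₂ * ε₄ * hε₃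

/-- The critical-point computation in Corollary 8.6 for the superpotential
`𝒲(x, y, z) = z⁻¹(ε₁x + ε₂xy⁻¹ + ε₃x⁻¹y + ε₄x⁻¹) + ε₅z` of the Lagrangian torus
`L₁,₁ᴾ ⊂ ℂP³(√2)`: any nonzero `(x, y, z)` with `x² = ε₁ε₄`, `y² = ε₁ε₂ε₃ε₄`,
`y ≠ −ε₁ε₂` and `z² = 2ε₄ε₅(y + ε₁ε₂)/(xy)` is a critical point of `𝒲`. -/
theorem superpotential_critical_point
    (ε₁ ε₂ ε₃ ε₄ ε₅ : ℂ)
    (h₁ : ε₁ = 1 ∨ ε₁ = -1) (h₂ : ε₂ = 1 ∨ ε₂ = -1) (h₃ : ε₃ = 1 ∨ ε₃ = -1)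
    (h₄ : ε₄ = 1 ∨ ε₄ = -1) (h₅ : ε₅ = 1 ∨ ε₅ = -1)
    (x y z : ℂ) (hx : x ≠ 0) (hy : y ≠ 0) (hz : z ≠ 0)
    (hx2 : x ^ 2 = ε₁ * ε₄) (hy2 : y ^ 2 = ε₁ * ε₂ * ε₃ * ε₄)
    (hyne : y ≠ -(ε₁ * ε₂))
    (hz2 : z ^ 2 = 2 * ε₄ * ε₅ * (y + ε₁ * ε₂) / (x * y)) :
    HasDerivAt
      (fun t : ℂ => z⁻¹ * (ε₁ * t + ε₂ * t * y⁻¹ + ε₃ * t⁻¹ * y + ε₄ * t⁻¹) + ε₅ * z) 0 x ∧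
    HasDerivAt
      (fun t : ℂ => z⁻¹ * (ε₁ * x + ε₂ * x * t⁻¹ + ε₃ * x⁻¹ * t + ε₄ * x⁻¹) + ε₅ * z) 0 y ∧
    HasDerivAt
      (fun t : ℂ => t⁻¹ * (ε₁ * x + ε₂ * x * y⁻¹ + ε₃ * x⁻¹ * y + ε₄ * x⁻¹) + ε₅ * t) 0 z :=
  superpotential_critical_point_general ε₁ ε₂ ε₃ ε₄ ε₅ h₁ h₃ h₅ x y z hx hy hz hx2 hy2 hz2
end
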